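/- A function f : [a,b] → ℝ has negligible variation on a set E ⊆ [a,b] if and only if there exists a null set Z ⊆ E such that f has negligible variation on Z and f'(x) = 0 for every x ∈ E \ Z. -/

import Mathlib

open Set MeasureTheory Filter
open scoped Classical

/-- A tagged partition of `[a, b]`: division points `t 0 = a ≤ t 1 ≤ ⋯ ≤ t n = b`
together with tags `tag i ∈ [t i, t (i+1)]`. -/
structure TaggedPartition (a b : ℝ) where
  n : ℕ
  t : ℕ → ℝ
  tag : ℕ → ℝ
  t_first : t 0 = a
  t_last : t n = b
  t_mono : ∀ i < n, t i ≤ t (i + 1)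
  tag_mem : ∀ i < n, tag i ∈ Set.Icc (t i) (t (i + 1))

/-- A tagged partition is subordinate to a gauge `δ` if each interval is contained in the
open ball of radius `δ` around its tag. -/
def TaggedPartition.Subordinate {a b : ℝ} (P : TaggedPartition a b) (δ : ℝ → ℝ) : Prop :=
  ∀ i < P.n,
    Set.Icc (P.t i) (P.t (i + 1)) ⊆ Set.Ioo (P.tag i - δ (P.tag i)) (P.tag i + δ (P.tag i))

/-- A gauge on `[a, b]` is positive on `[a, b]`. -/
def IsGauge (a b : ℝ) (δ : ℝ → ℝ) : Prop := ∀ x ∈ Set.Icc a b, 0 < δ x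

/-- `f` has negligible variation on `E ⊆ [a, b]`. -/

def NegVar (a b : ℝ) (f : ℝ → ℝ) (E : Set ℝ) : Prop :=
  ∀ ε > 0, ∃ δ : ℝ → ℝ, IsGauge a b δ ∧ ∀ P : TaggedPartition a b, P.Subordinate δ →
    (∑ i ∈ Finset.range P.n,
      if P.tag i ∈ E then |f (P.t (i + 1)) - f (P.t i)| else 0) < ε

/-- `f` has negligible conditional variation on `E ⊆ [a, b]`. -/

def NegCondVar (a b : ℝ) (f : ℝ → ℝ) (E : Set ℝ) : Prop :=
  ∀ ε > 0, ∃ δ : ℝ → ℝ, IsGauge a b δ ∧ ∀ P : TaggedPartition a b, P.Subordinate δ →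
    |∑ i ∈ Finset.range P.n,
      if P.tag i ∈ E then f (P.t (i + 1)) - f (P.t i) else 0| < ε

/-- `I` is the Henstock–Kurzweil integral of `h` on `[a, b]` (with `a ≤ b`). -/
def HKIntegralTo (a b : ℝ) (h : ℝ → ℝ) (I : ℝ) : Prop :=
  ∀ ε > 0, ∃ δ : ℝ → ℝ, IsGauge a b δ ∧ ∀ P : TaggedPartition a b, P.Subordinate δ →
    |(∑ i ∈ Finset.range P.n, h (P.tag i) * (P.t (i + 1) - P.t i)) - I| < ε

/-- Oriented HK integral: `(HK)∫_a^b h = I`, with the convention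
`(HK)∫_b^a h = -(HK)∫_a^b h`. -/
def HKIntegral (a b : ℝ) (h : ℝ → ℝ) (I : ℝ) : Prop :=
  if a ≤ b then HKIntegralTo a b h I else HKIntegralTo b a h (-I)


/-! If `f` has negligible variation on `E`, then at each point of `E` where `f' = 0` fails there
are arbitrarily short intervals `[x, y]` on which `|f y - f x| > c |y - x|` for some fixed
`c = 1/(n+1)`. By the Vitali covering theorem disjoint such intervals cover almost all of these
points; finitely many disjoint `δ`-fine tagged intervals extend to a `δ`-fine partition (Cousin's
lemma), so their total length is at most `ε / c`. Hence the points where `f' = 0` fails form a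
null set. Conversely, `f' = 0` at a tag `x ∈ [u, v]` gives `|f v - f u| ≤ η (v - u)` on
sufficiently fine intervals, for any `η > 0`, so `f` has negligible variation on `E \ Z`, and
negligible variation is preserved under unions. -/

open Topology

theorem IsGauge.mono {a b a' b' : ℝ} {δ : ℝ → ℝ} (hδ : IsGauge a b δ)
    (h : Icc a' b' ⊆ Icc a b) :
    IsGauge a' b' δ :=
  fun x hx => hδ x (h hx)

namespace TaggedPartition

variable {a b c : ℝ}

def sum (P : TaggedPartition a b) (g : ℝ → ℝ → ℝ → ℝ) : ℝ :=
  ∑ i ∈ Finset.range P.n, g (P.tag i) (P.t i) (P.t (i + 1))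

theorem sum_nonneg (P : TaggedPartition a b) {g : ℝ → ℝ → ℝ → ℝ}
    (hg : ∀ x u v, 0 ≤ g x u v) : 0 ≤ P.sum g :=
  Finset.sum_nonneg fun _ _ => hg _ _ _

theorem monotone_t_min (P : TaggedPartition a b) : Monotone fun i => P.t (min i P.n) :=
  monotone_nat_of_le_succ fun i => by
    rcases lt_or_ge i P.n with h | h
    · simpa [min_eq_left h.le, min_eq_left (Nat.succ_le_of_lt h)] using P.t_mono i h
    · simp [min_eq_right h, min_eq_right (h.trans i.le_succ)]

theorem t_mem_Icc (P : TaggedPartition a b) {i : ℕ} (hi : i ≤ P.n) : P.t i ∈ Icc a b := by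
  have h0 := P.monotone_t_min (Nat.zero_le i)
  have hn := P.monotone_t_min hi
  simp only [Nat.zero_min, min_eq_left hi, min_self, P.t_first, P.t_last] at h0 hn
  exact ⟨h0, hn⟩

theorem sum_mono (P : TaggedPartition a b) {g g' : ℝ → ℝ → ℝ → ℝ}
    (h : ∀ x u v, g x u v ≤ g' x u v) : P.sum g ≤ P.sum g' :=
  Finset.sum_le_sum fun _ _ => h _ _ _

theorem sum_add (P : TaggedPartition a b) (g g' : ℝ → ℝ → ℝ → ℝ) :
    P.sum (fun x u v => g x u v + g' x u v) = P.sum g + P.sum g' :=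
  Finset.sum_add_distrib

theorem Subordinate.mono {P : TaggedPartition a b} {δ δ' : ℝ → ℝ} (hP : P.Subordinate δ)
    (h : ∀ x, δ x ≤ δ' x) : P.Subordinate δ' :=
  fun i hi => (hP i hi).trans <|
    Ioo_subset_Ioo (by linarith [h (P.tag i)]) (by linarith [h (P.tag i)])

theorem sum_length (P : TaggedPartition a b) :
    P.sum (fun _ u v => v - u) = b - a := by
  rw [sum, Finset.sum_range_sub P.t, P.t_last, P.t_first]

def single (x : ℝ) (hax : a ≤ x) (hxb : x ≤ b) : TaggedPartition a b where
  n := 1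
  t i := if i = 0 then a else b
  tag _ := x
  t_first := rfl
  t_last := rfl
  t_mono i hi := by simp [Nat.lt_one_iff.1 hi, hax.trans hxb]
  tag_mem i hi := by simp [Nat.lt_one_iff.1 hi, hax, hxb]

theorem sum_single {x : ℝ} (hax : a ≤ x) (hxb : x ≤ b) (g : ℝ → ℝ → ℝ → ℝ) :
    (single x hax hxb).sum g = g x a b := by
  simp [sum, single]

theorem subordinate_single {x : ℝ} (hax : a ≤ x) (hxb : x ≤ b) {δ : ℝ → ℝ}
    (h : Icc a b ⊆ Ioo (x - δ x) (x + δ x)) : (single x hax hxb).Subordinate δ := by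
  intro i hi
  simpa [single, Nat.lt_one_iff.1 hi] using h

theorem ite_t_of_le (P : TaggedPartition a b) (Q : TaggedPartition b c) {i : ℕ} (hi : i ≤ P.n) :
    (if i < P.n then P.t i else Q.t (i - P.n)) = P.t i := by
  rcases lt_or_eq_of_le hi with h | rfl
  · simp [h]
  · simp [Q.t_first, P.t_last]

def append (P : TaggedPartition a b) (Q : TaggedPartition b c) : TaggedPartition a c where
  n := P.n + Q.n
  t i := if i < P.n then P.t i else Q.t (i - P.n)
  tag i := if i < P.n then P.tag i else Q.tag (i - P.n)
  t_first := by rw [ite_t_of_le P Q (Nat.zero_le _), P.t_first]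
  t_last := by simp [Q.t_last]
  t_mono i hi := by
    rcases lt_or_ge i P.n with h | h
    · rw [ite_t_of_le P Q h.le, ite_t_of_le P Q h]
      exact P.t_mono i h
    · simpa [Nat.not_lt.2 h, Nat.not_lt.2 (h.trans i.le_succ), Nat.sub_add_comm h]
        using Q.t_mono (i - P.n) (by omega)
  tag_mem i hi := by
    rcases lt_or_ge i P.n with h | h
    · rw [ite_t_of_le P Q h.le, ite_t_of_le P Q h, if_pos h]
      exact P.tag_mem i h
    · simpa [Nat.not_lt.2 h, Nat.not_lt.2 (h.trans i.le_succ), Nat.sub_add_comm h]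
        using Q.tag_mem (i - P.n) (by omega)

theorem append_t_of_le (P : TaggedPartition a b) (Q : TaggedPartition b c) {i : ℕ}
    (hi : i ≤ P.n) : (P.append Q).t i = P.t i :=
  ite_t_of_le P Q hi

theorem append_tag_of_lt (P : TaggedPartition a b) (Q : TaggedPartition b c) {i : ℕ}
    (hi : i < P.n) : (P.append Q).tag i = P.tag i :=
  if_pos hi

theorem append_t_add (P : TaggedPartition a b) (Q : TaggedPartition b c) (j : ℕ) :
    (P.append Q).t (P.n + j) = Q.t j := by
  simp [append]

theorem append_tag_add (P : TaggedPartition a b) (Q : TaggedPartition b c) (j : ℕ) :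
    (P.append Q).tag (P.n + j) = Q.tag j := by
  simp [append]

theorem sum_append (P : TaggedPartition a b) (Q : TaggedPartition b c)
    (g : ℝ → ℝ → ℝ → ℝ) :
    (P.append Q).sum g = P.sum g + Q.sum g := by
  refine (Finset.sum_range_add _ P.n Q.n).trans (congrArg₂ _ ?_ ?_)
  · refine Finset.sum_congr rfl fun i hi => ?_
    have hi := Finset.mem_range.1 hi
    rw [append_tag_of_lt P Q hi, append_t_of_le P Q hi.le, append_t_of_le P Q hi]
  · refine Finset.sum_congr rfl fun j _ => ?_
    rw [append_tag_add, append_t_add, add_assoc, append_t_add]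

theorem Subordinate.append {P : TaggedPartition a b} {Q : TaggedPartition b c} {δ : ℝ → ℝ}
    (hP : P.Subordinate δ) (hQ : Q.Subordinate δ) : (P.append Q).Subordinate δ := by
  intro i hi
  rcases lt_or_ge i P.n with h | h
  · rw [append_tag_of_lt P Q h, append_t_of_le P Q h.le, append_t_of_le P Q h]
    exact hP i h
  · obtain ⟨j, rfl⟩ := Nat.exists_eq_add_of_le h
    rw [append_tag_add, append_t_add, add_assoc, append_t_add]
    exact hQ j (by change P.n + j < P.n + Q.n at hi; omega)

theorem exists_subordinate {δ : ℝ → ℝ} (hab : a ≤ b) (hδ : IsGauge a b δ) :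
    ∃ P : TaggedPartition a b, P.Subordinate δ := by
  set S := {x ∈ Icc a b | ∃ P : TaggedPartition a x, P.Subordinate δ}
  have haS : a ∈ S := by
    refine ⟨left_mem_Icc.2 hab, single a le_rfl le_rfl, subordinate_single _ _ ?_⟩
    have := hδ a (left_mem_Icc.2 hab)
    exact Icc_subset_Ioo (by linarith) (by linarith)
  have hbdd : BddAbove S := ⟨b, fun x hx => hx.1.2⟩
  set s := sSup S
  have hs : s ∈ Icc a b := ⟨le_csSup hbdd haS, csSup_le ⟨a, haS⟩ fun x hx => hx.1.2⟩
  have hδs := hδ s hs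
  obtain ⟨x, ⟨hx, P, hP⟩, hsx⟩ := exists_lt_of_lt_csSup ⟨a, haS⟩ (sub_lt_self s hδs)
  have hxs : x ≤ s := le_csSup hbdd ⟨hx, P, hP⟩
  set y := min b (s + δ s / 2)
  have hsy : s ≤ y := le_min hs.2 (by linarith)
  have hyS : y ∈ S := by
    refine ⟨⟨hx.1.trans (hxs.trans hsy), min_le_left _ _⟩,
      P.append (single s hxs hsy), hP.append (subordinate_single _ _ ?_)⟩
    exact Icc_subset_Ioo hsx ((min_le_right _ _).trans_lt (by linarith))
  have hyb : y = b := by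
    have hys : y ≤ s := le_csSup hbdd hyS
    rcases min_le_iff.1 hys with h | h
    · exact min_eq_left (by linarith)
    · linarith
  exact hyb ▸ hyS.2

theorem exists_subordinate_sum_le {δ : ℝ → ℝ} {g : ℝ → ℝ → ℝ → ℝ}
    (hg : ∀ x u v, 0 ≤ g x u v) (F : Finset (ℝ × ℝ))
    (hF : ∀ p ∈ F, uIcc p.1 p.2 ⊆ Icc a b ∩ Ioo (p.1 - δ p.1) (p.1 + δ p.1))
    (hdisj : (F : Set (ℝ × ℝ)).PairwiseDisjoint fun p => uIcc p.1 p.2)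
    (hab : a ≤ b) (hδ : IsGauge a b δ) :
    ∃ P : TaggedPartition a b, P.Subordinate δ ∧
      ∑ p ∈ F, g p.1 (min p.1 p.2) (max p.1 p.2) ≤ P.sum g := by
  induction F using Finset.induction_on_max_value (fun p : ℝ × ℝ => max p.1 p.2)
    generalizing b with
  | empty =>
    obtain ⟨P, hP⟩ := exists_subordinate hab hδ
    exact ⟨P, hP, by simpa using P.sum_nonneg hg⟩
  | insert p F hpF hmax ih =>
    -- `p` ends rightmost, so the others lie in `[a, min p]`; Cousin's lemma fills `[max p, b]`.
    set u := min p.1 p.2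
    set v := max p.1 p.2
    have hp : Icc u v ⊆ Icc a b ∩ Ioo (p.1 - δ p.1) (p.1 + δ p.1) :=
      hF p (F.mem_insert_self p)
    have hu : a ≤ u := (hp ⟨le_rfl, min_le_max⟩).1.1
    have hv : v ≤ b := (hp ⟨min_le_max, le_rfl⟩).1.2
    have hleft : ∀ q ∈ F, max q.1 q.2 ≤ u := by
      intro q hq
      by_contra! h
      have hqp : q ≠ p := fun hqp => hpF (hqp ▸ hq)
      exact Set.disjoint_left.1 (hdisj (by simp [hq]) (by simp) hqp)
        (⟨min_le_max, le_rfl⟩ : max q.1 q.2 ∈ uIcc q.1 q.2) ⟨h.le, hmax q hq⟩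
    obtain ⟨P₁, hP₁, hsum₁⟩ := ih
      (fun q hq z hz => ⟨⟨(hF q (by simp [hq]) hz).1.1, hz.2.trans (hleft q hq)⟩,
        (hF q (by simp [hq]) hz).2⟩)
      (hdisj.subset (by simp)) hu (hδ.mono (Icc_subset_Icc le_rfl (min_le_max.trans hv)))
    obtain ⟨P₃, hP₃⟩ :=
      exists_subordinate hv (hδ.mono (Icc_subset_Icc (hu.trans min_le_max) le_rfl))
    have hPₘ :=
      subordinate_single (min_le_left p.1 p.2) (le_max_left p.1 p.2) fun z hz => (hp hz).2
    refine ⟨P₁.append ((single _ _ _).append P₃), hP₁.append (hPₘ.append hP₃), ?_⟩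
    rw [Finset.sum_insert hpF, sum_append, sum_append, sum_single]
    linarith [P₃.sum_nonneg hg]

end TaggedPartition

section NegligibleVariation

variable {a b : ℝ} {f : ℝ → ℝ}

noncomputable def varOn (f : ℝ → ℝ) (E : Set ℝ) (x u v : ℝ) : ℝ :=
  if x ∈ E then |f v - f u| else 0

theorem varOn_nonneg (f : ℝ → ℝ) (E : Set ℝ) (x u v : ℝ) : 0 ≤ varOn f E x u v := by
  unfold varOn; split_ifs <;> positivity

theorem varOn_mono {S T : Set ℝ} (h : S ⊆ T) (x u v : ℝ) :
    varOn f S x u v ≤ varOn f T x u v := by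
  by_cases hx : x ∈ S
  · simp [varOn, hx, h hx]
  · simpa [varOn, hx] using varOn_nonneg f T x u v

theorem varOn_union_le (S T : Set ℝ) (x u v : ℝ) :
    varOn f (S ∪ T) x u v ≤ varOn f S x u v + varOn f T x u v := by
  unfold varOn; split_ifs <;> simp_all

theorem negVar_iff {E : Set ℝ} :
    NegVar a b f E ↔ ∀ ε > 0, ∃ δ : ℝ → ℝ, IsGauge a b δ ∧
      ∀ P : TaggedPartition a b, P.Subordinate δ → P.sum (varOn f E) < ε :=
  Iff.rfl

theorem NegVar.mono {S T : Set ℝ} (hT : NegVar a b f T) (hST : S ⊆ T) : NegVar a b f S := by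
  rw [negVar_iff] at *
  intro ε hε
  obtain ⟨δ, hδ, h⟩ := hT ε hε
  exact ⟨δ, hδ, fun P hP => (P.sum_mono (varOn_mono hST)).trans_lt (h P hP)⟩

theorem NegVar.union {S T : Set ℝ} (hS : NegVar a b f S) (hT : NegVar a b f T) :
    NegVar a b f (S ∪ T) := by
  rw [negVar_iff] at *
  intro ε hε
  obtain ⟨δ₁, hδ₁, h₁⟩ := hS (ε / 2) (half_pos hε)
  obtain ⟨δ₂, hδ₂, h₂⟩ := hT (ε / 2) (half_pos hε)
  refine ⟨fun x => min (δ₁ x) (δ₂ x), fun x hx => lt_min (hδ₁ x hx) (hδ₂ x hx),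
    fun P hP => ?_⟩
  calc P.sum (varOn f (S ∪ T)) ≤ P.sum (varOn f S) + P.sum (varOn f T) :=
        (P.sum_mono (varOn_union_le S T)).trans_eq (P.sum_add _ _)
    _ < ε / 2 + ε / 2 :=
        add_lt_add (h₁ P (hP.mono fun _ => min_le_left _ _))
          (h₂ P (hP.mono fun _ => min_le_right _ _))
    _ = ε := add_halves ε

theorem exists_abs_sub_le_of_hasDerivWithinAt_zero {s : Set ℝ} {x η : ℝ}
    (hf : HasDerivWithinAt f 0 s x) (hη : 0 < η) :
    ∃ r > 0, ∀ y ∈ Ioo (x - r) (x + r) ∩ s, |f y - f x| ≤ η * |y - x| := by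
  obtain ⟨r, hr, h⟩ := Metric.mem_nhdsWithin_iff.1
    ((hasDerivWithinAt_iff_isLittleO.1 hf).bound hη)
  exact ⟨r, hr, fun y hy => by simpa using h (Real.ball_eq_Ioo x r ▸ hy)⟩

theorem abs_sub_le_of_straddle {x u v η : ℝ} (hux : u ≤ x) (hxv : x ≤ v)
    (hu : |f u - f x| ≤ η * |u - x|) (hv : |f v - f x| ≤ η * |v - x|) :
    |f v - f u| ≤ η * (v - u) := by
  rw [abs_sub_comm u, abs_of_nonneg (sub_nonneg.2 hux), abs_sub_comm] at hu
  rw [abs_of_nonneg (sub_nonneg.2 hxv)] at hv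
  calc |f v - f u| ≤ |f v - f x| + |f x - f u| := abs_sub_le _ _ _
    _ ≤ η * (v - u) := by linarith

theorem negVar_of_hasDerivWithinAt_zero {S : Set ℝ}
    (hd : ∀ x ∈ S, HasDerivWithinAt f 0 (Icc a b) x) : NegVar a b f S := by
  rw [negVar_iff]
  intro ε hε
  set η := ε / (|b - a| + 1)
  have hη : 0 < η := by positivity
  have hloc : ∀ x, ∃ r > 0, x ∈ S →
      ∀ y ∈ Ioo (x - r) (x + r) ∩ Icc a b, |f y - f x| ≤ η * |y - x| := by
    intro x
    by_cases hx : x ∈ S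
    · obtain ⟨r, hr, h⟩ := exists_abs_sub_le_of_hasDerivWithinAt_zero (hd x hx) hη
      exact ⟨r, hr, fun _ => h⟩
    · exact ⟨1, one_pos, fun h => absurd h hx⟩
  choose δ hδ hδS using hloc
  refine ⟨δ, fun x _ => hδ x, fun P hP => ?_⟩
  have hterm : ∀ i < P.n,
      varOn f S (P.tag i) (P.t i) (P.t (i + 1)) ≤ η * (P.t (i + 1) - P.t i) := by
    intro i hi
    obtain ⟨hux, hxv⟩ := P.tag_mem i hi
    by_cases hx : P.tag i ∈ S
    · have est : ∀ y ∈ Icc (P.t i) (P.t (i + 1)), |f y - f (P.tag i)| ≤ η * |y - P.tag i| :=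
        fun y hy => hδS _ hx y ⟨hP i hi hy,
          Icc_subset_Icc (P.t_mem_Icc hi.le).1 (P.t_mem_Icc (Nat.succ_le_of_lt hi)).2 hy⟩
      rw [varOn, if_pos hx]
      exact abs_sub_le_of_straddle hux hxv (est _ (left_mem_Icc.2 (hux.trans hxv)))
        (est _ (right_mem_Icc.2 (hux.trans hxv)))
    · simpa [varOn, hx] using mul_nonneg hη.le (sub_nonneg.2 (hux.trans hxv))
  calc P.sum (varOn f S) ≤ P.sum (fun _ u v => η * (v - u)) :=
        Finset.sum_le_sum fun i hi => hterm i (Finset.mem_range.1 hi)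
    _ = η * (b - a) := by
        rw [TaggedPartition.sum, ← Finset.mul_sum]; exact congrArg _ P.sum_length
    _ < ε := by
        rw [← div_mul_cancel₀ ε (by positivity : |b - a| + 1 ≠ 0)]
        exact mul_lt_mul_of_pos_left (by linarith [le_abs_self (b - a)]) hη

end NegligibleVariation

section NullSet

variable {a b : ℝ} {f : ℝ → ℝ}

theorem exists_frequently_lt_of_not_hasDerivWithinAt_zero {s : Set ℝ} {x : ℝ}
    (h : ¬HasDerivWithinAt f 0 s x) :
    ∃ n : ℕ, ∃ᶠ y in 𝓝[s] x, 1 / ((n : ℝ) + 1) * |y - x| < |f y - f x| := by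
  rw [hasDerivWithinAt_iff_isLittleO, Asymptotics.isLittleO_iff] at h
  push Not at h
  obtain ⟨c, hc, hfreq⟩ := h
  obtain ⟨n, hn⟩ := exists_nat_one_div_lt hc
  refine ⟨n, hfreq.mono fun y hy => lt_of_le_of_lt ?_ (by simpa using hy)⟩
  exact mul_le_mul_of_nonneg_right hn.le (abs_nonneg _)

theorem varOn_min_max {E : Set ℝ} {x : ℝ} (hx : x ∈ E) (y : ℝ) :
    varOn f E x (min x y) (max x y) = |f y - f x| := by
  rcases le_total x y with h | h
  · simp [varOn, hx, h]
  · simp [varOn, hx, h, abs_sub_comm]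

theorem sum_abs_sub_lt_of_negVar (hab : a ≤ b) {E : Set ℝ} (hE : E ⊆ Icc a b) {δ : ℝ → ℝ}
    (hδ : IsGauge a b δ) {c ε : ℝ} (hc : 0 < c)
    (hsum : ∀ P : TaggedPartition a b, P.Subordinate δ → P.sum (varOn f E) < c * ε)
    {F : Finset (ℝ × ℝ)}
    (hF : ∀ p ∈ F, p.1 ∈ E ∧ p.2 ∈ Icc a b ∧ |p.2 - p.1| < δ p.1 ∧
      c * |p.2 - p.1| < |f p.2 - f p.1|)
    (hdisj : (F : Set (ℝ × ℝ)).PairwiseDisjoint fun p => uIcc p.1 p.2) :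
    ∑ p ∈ F, |p.2 - p.1| < ε := by
  obtain ⟨P, hP, hle⟩ := TaggedPartition.exists_subordinate_sum_le (varOn_nonneg f E) F
    (fun p hp => by
      obtain ⟨hp₁, hp₂, hpδ, -⟩ := hF p hp
      refine subset_inter (uIcc_subset_Icc (hE hp₁) hp₂) fun z hz => ?_
      rw [← Real.ball_eq_Ioo, Metric.mem_ball, Real.dist_eq]
      exact (abs_sub_left_of_mem_uIcc hz).trans_lt hpδ)
    hdisj hab hδ
  refine lt_of_mul_lt_mul_left ?_ hc.le
  calc c * ∑ p ∈ F, |p.2 - p.1| = ∑ p ∈ F, c * |p.2 - p.1| := Finset.mul_sum _ _ _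
    _ ≤ ∑ p ∈ F, varOn f E p.1 (min p.1 p.2) (max p.1 p.2) :=
      Finset.sum_le_sum fun p hp => by
        rw [varOn_min_max (hF p hp).1]; exact (hF p hp).2.2.2.le
    _ ≤ P.sum (varOn f E) := hle
    _ < c * ε := hsum P hP

theorem volume_eq_zero_of_negVar_of_frequently_lt (hab : a ≤ b) {E : Set ℝ} (hE : E ⊆ Icc a b)
    (hf : NegVar a b f E) {c : ℝ} (hc : 0 < c)
    (hsteep : ∀ x ∈ E, ∃ᶠ y in 𝓝[Icc a b] x, c * |y - x| < |f y - f x|) :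
    volume E = 0 := by
  refine le_antisymm (ENNReal.le_of_forall_pos_le_add fun ε hε _ => ?_) zero_le
  rw [zero_add]
  obtain ⟨δ, hδ, hsum⟩ := negVar_iff.1 hf (c * ε) (by positivity)
  set T := {p : ℝ × ℝ | p.1 ∈ E ∧ p.2 ∈ Icc a b ∧ |p.2 - p.1| < δ p.1 ∧
    c * |p.2 - p.1| < |f p.2 - f p.1|}
  obtain ⟨u, huT, hu, hdisj, hcov⟩ := Vitali.exists_disjoint_covering_ae volume E T 6
    (fun p => |p.2 - p.1|) Prod.fst (fun p => uIcc p.1 p.2)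
    (fun p _ z hz => by
      rw [Metric.mem_closedBall, Real.dist_eq]; exact abs_sub_left_of_mem_uIcc hz)
    (fun p _ => by
      rw [Real.volume_closedBall, Real.volume_interval,
        show ((6 : NNReal) : ENNReal) = ENNReal.ofReal 6 by norm_num,
        ← ENNReal.ofReal_mul (by norm_num)]
      exact ENNReal.ofReal_le_ofReal (by linarith [abs_nonneg (p.2 - p.1)]))
    (fun p ⟨_, _, _, hp⟩ => by
      have hne : p.1 ≠ p.2 := by rintro h; simp [h] at hp
      simpa [uIcc] using min_lt_max.2 hne)
    (fun _ _ => isClosed_Icc)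
    (fun x hx ε' hε' => by
      have hev : ∀ᶠ y in 𝓝[Icc a b] x, y ∈ Icc a b ∧ |y - x| < min ε' (δ x) :=
        eventually_mem_nhdsWithin.and (nhdsWithin_le_nhds
          (Metric.eventually_nhds_iff_ball.2 ⟨_, lt_min hε' (hδ x (hE hx)), fun y hy => hy⟩))
      obtain ⟨y, hy, hyI, hyx⟩ := ((hsteep x hx).and_eventually hev).exists
      exact ⟨(x, y), ⟨hx, hyI, hyx.trans_le (min_le_right _ _), hy⟩,
        hyx.le.trans (min_le_left _ _), rfl⟩)
  have hfinite : ∀ F : Finset (ℝ × ℝ), ↑F ⊆ u →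
      ∑ p ∈ F, volume (uIcc p.1 p.2) ≤ ε := by
    intro F hF
    have hlen := sum_abs_sub_lt_of_negVar hab hE hδ hc hsum (fun p hp => huT (hF hp))
      (hdisj.subset hF)
    calc ∑ p ∈ F, volume (uIcc p.1 p.2) = ∑ p ∈ F, ENNReal.ofReal |p.2 - p.1| :=
          Finset.sum_congr rfl fun _ _ => Real.volume_interval
      _ = ENNReal.ofReal (∑ p ∈ F, |p.2 - p.1|) :=
          (ENNReal.ofReal_sum_of_nonneg fun _ _ => abs_nonneg _).symm
      _ ≤ ε := by
          rw [← ENNReal.ofReal_coe_nnreal]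
          exact ENNReal.ofReal_le_ofReal hlen.le
  calc volume E
      ≤ volume (E ∩ ⋃ p ∈ u, uIcc p.1 p.2) + volume (E \ ⋃ p ∈ u, uIcc p.1 p.2) :=
        measure_le_inter_add_sdiff _ _ _
    _ ≤ ∑' p : u, volume (uIcc p.1.1 p.1.2) + 0 :=
        add_le_add ((measure_mono inter_subset_right).trans (measure_biUnion_le _ hu _)) hcov.le
    _ ≤ ε := by
        rw [add_zero]
        refine ENNReal.summable.tsum_le_of_sum_le fun s => ?_
        have := hfinite (s.map (Function.Embedding.subtype _)) (by simp)
        rwa [Finset.sum_map] at this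

theorem volume_setOf_not_hasDerivWithinAt_zero (hab : a ≤ b) {E : Set ℝ} (hE : E ⊆ Icc a b)
    (hf : NegVar a b f E) : volume {x ∈ E | ¬HasDerivWithinAt f 0 (Icc a b) x} = 0 := by
  refine measure_mono_null (t := ⋃ n : ℕ,
    {x ∈ E | ∃ᶠ y in 𝓝[Icc a b] x, 1 / ((n : ℝ) + 1) * |y - x| < |f y - f x|})
    (fun x ⟨hx, hd⟩ => ?_) (measure_iUnion_null fun n => ?_)
  · obtain ⟨n, hn⟩ := exists_frequently_lt_of_not_hasDerivWithinAt_zero hd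
    exact mem_iUnion.2 ⟨n, hx, hn⟩
  · exact volume_eq_zero_of_negVar_of_frequently_lt hab (fun x hx => hE hx.1)
      (hf.mono fun x hx => hx.1) (by positivity) fun x hx => hx.2

end NullSet

/-- `f` has negligible variation on `E` iff there is a null `Z ⊆ E` such that
`f` has negligible variation on `Z` and `f' = 0` on `E \ Z`. -/
theorem stmt7 (a b : ℝ) (hab : a ≤ b) (f : ℝ → ℝ) (E : Set ℝ) (hE : E ⊆ Set.Icc a b) :
    NegVar a b f E ↔
      ∃ Z : Set ℝ, Z ⊆ E ∧ MeasureTheory.volume Z = 0 ∧ NegVar a b f Z ∧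
        ∀ x ∈ E \ Z, HasDerivWithinAt f 0 (Set.Icc a b) x := by
  constructor
  · intro hf
    refine ⟨{x ∈ E | ¬HasDerivWithinAt f 0 (Icc a b) x}, sep_subset _ _,
      volume_setOf_not_hasDerivWithinAt_zero hab hE hf, hf.mono (sep_subset _ _), fun x hx => ?_⟩
    by_contra hd
    exact hx.2 ⟨hx.1, hd⟩
  · rintro ⟨Z, -, -, hZ, hd⟩
    exact (hZ.union (negVar_of_hasDerivWithinAt_zero hd)).mono (sdiff_subset_iff.1 subset_rfl)
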